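/- Monotonicity of rule semantics: if η is an initial segment of ξ, then (1) if η is final for rule R in X, so is ξ; (2) if η succeeds for R, so does ξ; (3) if η fails for R, so does ξ; and (4) the update set produced by R under ξ includes the update set produced under η. -/

import Mathlib

/-!
Along initial segments, term values only get defined and never change, since a query
answered in `η` has the same answer in `ξ`. Timing guards keep their truth values because
the initial segments of a history are linearly ordered, and the Kleene connectives are
monotone; monotonicity of finality, failure and update sets follows by induction on the
rule. For success the only subtle point is the absence of clashes in a parallel rule: if
`R` is already final at `η`, every update of `R` at `ξ` is one at `η`, because every guard
met has a truth value at `η`, which is the only one it can have at `ξ` (as `tval ≠ fval`).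
-/

/-- ASM-terms over an internal vocabulary F and an external vocabulary E
(no variables); arities are not tracked, arguments are lists. -/
inductive Term (F E : Type*) : Type _
  | func : F → List (Term F E) → Term F E
  | ext  : E → List (Term F E) → Term F E

/-- Value relation ⟦t⟧_X^ξ = a, relative to a state `X` (interpretation of the
internal symbols), a template assignment `tmpl`, and the answer function `ans`
of a history.  For an internal symbol the value is `X f` applied to the
argument values; for an external symbol it is the reply `ans (tmpl e as)`
to the query `tmpl e as` (the q-value), when that query is answered. -/
inductive Val {A Q F E : Type*} (X : F → List A → A) (tmpl : E → List A → Q)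
    (ans : Q → Option A) : Term F E → A → Prop
  | func {f : F} {ts : List (Term F E)} {as : List A} :
      ts.length = as.length →
      (∀ p ∈ ts.zip as, Val X tmpl ans p.1 p.2) →
      Val X tmpl ans (.func f ts) (X f as)
  | ext {e : E} {ts : List (Term F E)} {as : List A} {a : A} :
      ts.length = as.length →
      (∀ p ∈ ts.zip as, Val X tmpl ans p.1 p.2) →
      ans (tmpl e as) = some a →
      Val X tmpl ans (.ext e ts) a

/-- q-value of a query-term: q-⟦f(t₁,…,tₙ)⟧ = f̂[a₁,…,aₙ]. -/
inductive QVal {A Q F E : Type*} (X : F → List A → A) (tmpl : E → List A → Q)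
    (ans : Q → Option A) : Term F E → Q → Prop
  | mk {e : E} {ts : List (Term F E)} {as : List A} :
      ts.length = as.length →
      (∀ p ∈ ts.zip as, Val X tmpl ans p.1 p.2) →
      QVal X tmpl ans (.ext e ts) (tmpl e as)

/-- Causality relation ξ ⊢_X^t q : the queries caused by a term.  When some
argument lacks a value, the queries are those caused by the arguments; when
all arguments of an external call have values and the resulting query is
unanswered, that query is caused. -/
inductive Causes {A Q F E : Type*} (X : F → List A → A) (tmpl : E → List A → Q)
    (ans : Q → Option A) : Term F E → Q → Prop
  | funcArg {f ts t' q} : t' ∈ ts → Causes X tmpl ans t' q →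
      Causes X tmpl ans (.func f ts) q
  | extArg {e ts t' q} : t' ∈ ts → Causes X tmpl ans t' q →
      Causes X tmpl ans (.ext e ts) q
  | extQ {e : E} {ts : List (Term F E)} {as : List A} :
      ts.length = as.length →
      (∀ p ∈ ts.zip as, Val X tmpl ans p.1 p.2) →
      ans (tmpl e as) = none →
      Causes X tmpl ans (.ext e ts) (tmpl e as)

/-- A history: a partial answer function together with a binary relation
(intended: a linear pre-order of its domain). -/
structure Hist (A Q : Type*) where
  ans : Q → Option A
  le : Q → Q → Prop

/-- ξ is a genuine history: `le` is a linear pre-order whose field is the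
domain of the answer function. -/
def IsHistory {A Q : Type*} (ξ : Hist A Q) : Prop :=
  (∀ x y, ξ.le x y → ξ.ans x ≠ none ∧ ξ.ans y ≠ none) ∧
  (∀ x, ξ.ans x ≠ none → ξ.le x x) ∧
  (∀ x y z, ξ.le x y → ξ.le y z → ξ.le x z) ∧
  (∀ x y, ξ.ans x ≠ none → ξ.ans y ≠ none → ξ.le x y ∨ ξ.le y x)

/-- η ⊴ ξ : η is the restriction of ξ to a downward-closed subset of dom ξ̇. -/
def InitSeg {A Q : Type*} (η ξ : Hist A Q) : Prop :=
  (∀ x, η.ans x ≠ none → η.ans x = ξ.ans x) ∧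
  (∀ x y, ξ.le x y → η.ans y ≠ none → η.ans x ≠ none) ∧
  (∀ x y, η.le x y ↔ (ξ.le x y ∧ η.ans x ≠ none ∧ η.ans y ≠ none))

/-- t has a defined value. -/
def HasVal {A Q F E : Type*} (X : F → List A → A) (tmpl : E → List A → Q)
    (ans : Q → Option A) (t : Term F E) : Prop :=
  ∃ a, Val X tmpl ans t a

/-- Guards: Boolean terms, timing comparisons (s ⪯ t), and the Kleene
connectives ⋏, ⋎, ¬. -/
inductive Guard (F E : Type*) : Type _
  | tm : Term F E → Guard F E
  | timing : Term F E → Term F E → Guard F E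
  | kand : Guard F E → Guard F E → Guard F E
  | kor : Guard F E → Guard F E → Guard F E
  | knot : Guard F E → Guard F E

/-- A Boolean term: its value (under any history) is always one of the two
designated truth elements. -/
def IsBooleanTerm {A Q F E : Type*} (X : F → List A → A) (tmpl : E → List A → Q)
    (tval fval : A) (t : Term F E) : Prop :=
  ∀ (ans : Q → Option A) (a : A), Val X tmpl ans t a → a = tval ∨ a = fval

/-- A guard all of whose atomic term constituents are Boolean terms. -/
inductive GoodGuard {A Q F E : Type*} (X : F → List A → A) (tmpl : E → List A → Q)
    (tval fval : A) : Guard F E → Prop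
  | tm {t} : IsBooleanTerm X tmpl tval fval t → GoodGuard X tmpl tval fval (.tm t)
  | timing {s t} : GoodGuard X tmpl tval fval (.timing s t)
  | kand {φ ψ} : GoodGuard X tmpl tval fval φ → GoodGuard X tmpl tval fval ψ →
      GoodGuard X tmpl tval fval (.kand φ ψ)
  | kor {φ ψ} : GoodGuard X tmpl tval fval φ → GoodGuard X tmpl tval fval ψ →
      GoodGuard X tmpl tval fval (.kor φ ψ)
  | knot {φ} : GoodGuard X tmpl tval fval φ → GoodGuard X tmpl tval fval (.knot φ)

/-- Truth-value semantics of guards ⟦φ⟧_X^ξ, in Kleene's strong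
three-valued logic; a timing guard (s ⪯ t) is true if s has a value and t
does not, or if both have values and every initial segment giving t a value
also gives s one; dually for falsity. -/
inductive GVal {A Q F E : Type*} (X : F → List A → A) (tmpl : E → List A → Q)
    (tval fval : A) (ξ : Hist A Q) : Guard F E → Bool → Prop
  | tmT {t} : Val X tmpl ξ.ans t tval → GVal X tmpl tval fval ξ (.tm t) true
  | tmF {t} : Val X tmpl ξ.ans t fval → GVal X tmpl tval fval ξ (.tm t) false
  | timingT₁ {s t} : HasVal X tmpl ξ.ans s → ¬ HasVal X tmpl ξ.ans t →
      GVal X tmpl tval fval ξ (.timing s t) true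
  | timingT₂ {s t} : HasVal X tmpl ξ.ans s → HasVal X tmpl ξ.ans t →
      (∀ η, IsHistory η → InitSeg η ξ → HasVal X tmpl η.ans t → HasVal X tmpl η.ans s) →
      GVal X tmpl tval fval ξ (.timing s t) true
  | timingF₁ {s t} : HasVal X tmpl ξ.ans t → ¬ HasVal X tmpl ξ.ans s →
      GVal X tmpl tval fval ξ (.timing s t) false
  | timingF₂ {s t} : HasVal X tmpl ξ.ans s → HasVal X tmpl ξ.ans t →
      (∃ η, IsHistory η ∧ InitSeg η ξ ∧ HasVal X tmpl η.ans t ∧ ¬ HasVal X tmpl η.ans s) →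
      GVal X tmpl tval fval ξ (.timing s t) false
  | kandT {φ ψ} : GVal X tmpl tval fval ξ φ true → GVal X tmpl tval fval ξ ψ true →
      GVal X tmpl tval fval ξ (.kand φ ψ) true
  | kandF₀ {φ ψ} : GVal X tmpl tval fval ξ φ false → GVal X tmpl tval fval ξ (.kand φ ψ) false
  | kandF₁ {φ ψ} : GVal X tmpl tval fval ξ ψ false → GVal X tmpl tval fval ξ (.kand φ ψ) false
  | korF {φ ψ} : GVal X tmpl tval fval ξ φ false → GVal X tmpl tval fval ξ ψ false →
      GVal X tmpl tval fval ξ (.kor φ ψ) false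
  | korT₀ {φ ψ} : GVal X tmpl tval fval ξ φ true → GVal X tmpl tval fval ξ (.kor φ ψ) true
  | korT₁ {φ ψ} : GVal X tmpl tval fval ξ ψ true → GVal X tmpl tval fval ξ (.kor φ ψ) true
  | knot {φ b} : GVal X tmpl tval fval ξ φ b → GVal X tmpl tval fval ξ (.knot φ) (!b)

/-- Queries caused by a guard, ξ ⊢_X^φ q. -/
inductive GCauses {A Q F E : Type*} (X : F → List A → A) (tmpl : E → List A → Q)
    (tval fval : A) (ξ : Hist A Q) : Guard F E → Q → Prop
  | tm {t q} : Causes X tmpl ξ.ans t q → GCauses X tmpl tval fval ξ (.tm t) q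
  | timingL {s t q} : ¬ HasVal X tmpl ξ.ans s → ¬ HasVal X tmpl ξ.ans t →
      Causes X tmpl ξ.ans s q → GCauses X tmpl tval fval ξ (.timing s t) q
  | timingR {s t q} : ¬ HasVal X tmpl ξ.ans s → ¬ HasVal X tmpl ξ.ans t →
      Causes X tmpl ξ.ans t q → GCauses X tmpl tval fval ξ (.timing s t) q
  | kand₁ {φ ψ q} : GVal X tmpl tval fval ξ φ true → (¬ ∃ b, GVal X tmpl tval fval ξ ψ b) →
      GCauses X tmpl tval fval ξ ψ q → GCauses X tmpl tval fval ξ (.kand φ ψ) q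
  | kand₂ {φ ψ q} : GVal X tmpl tval fval ξ ψ true → (¬ ∃ b, GVal X tmpl tval fval ξ φ b) →
      GCauses X tmpl tval fval ξ φ q → GCauses X tmpl tval fval ξ (.kand φ ψ) q
  | kand₃l {φ ψ q} : (¬ ∃ b, GVal X tmpl tval fval ξ φ b) → (¬ ∃ b, GVal X tmpl tval fval ξ ψ b) →
      GCauses X tmpl tval fval ξ φ q → GCauses X tmpl tval fval ξ (.kand φ ψ) q
  | kand₃r {φ ψ q} : (¬ ∃ b, GVal X tmpl tval fval ξ φ b) → (¬ ∃ b, GVal X tmpl tval fval ξ ψ b) →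
      GCauses X tmpl tval fval ξ ψ q → GCauses X tmpl tval fval ξ (.kand φ ψ) q
  | kor₁ {φ ψ q} : GVal X tmpl tval fval ξ φ false → (¬ ∃ b, GVal X tmpl tval fval ξ ψ b) →
      GCauses X tmpl tval fval ξ ψ q → GCauses X tmpl tval fval ξ (.kor φ ψ) q
  | kor₂ {φ ψ q} : GVal X tmpl tval fval ξ ψ false → (¬ ∃ b, GVal X tmpl tval fval ξ φ b) →
      GCauses X tmpl tval fval ξ φ q → GCauses X tmpl tval fval ξ (.kor φ ψ) q
  | kor₃l {φ ψ q} : (¬ ∃ b, GVal X tmpl tval fval ξ φ b) → (¬ ∃ b, GVal X tmpl tval fval ξ ψ b) →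
      GCauses X tmpl tval fval ξ φ q → GCauses X tmpl tval fval ξ (.kor φ ψ) q
  | kor₃r {φ ψ q} : (¬ ∃ b, GVal X tmpl tval fval ξ φ b) → (¬ ∃ b, GVal X tmpl tval fval ξ ψ b) →
      GCauses X tmpl tval fval ξ ψ q → GCauses X tmpl tval fval ξ (.kor φ ψ) q
  | knot {φ q} : (¬ ∃ b, GVal X tmpl tval fval ξ φ b) →
      GCauses X tmpl tval fval ξ φ q → GCauses X tmpl tval fval ξ (.knot φ) q

/-- ASM rules: updates, issue rules, fail, conditionals and parallel
combinations. -/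
inductive Rule (F E : Type*) : Type _
  | upd : F → List (Term F E) → Term F E → Rule F E
  | issue : E → List (Term F E) → Rule F E
  | fail : Rule F E
  | cond : Guard F E → Rule F E → Rule F E → Rule F E
  | par : List (Rule F E) → Rule F E

/-- A rule all of whose guards are built from Boolean terms. -/
inductive GoodRule {A Q F E : Type*} (X : F → List A → A) (tmpl : E → List A → Q)
    (tval fval : A) : Rule F E → Prop
  | upd {f ts t0} : GoodRule X tmpl tval fval (.upd f ts t0)
  | issue {e ts} : GoodRule X tmpl tval fval (.issue e ts)
  | fail : GoodRule X tmpl tval fval .fail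
  | cond {φ R0 R1} : GoodGuard X tmpl tval fval φ → GoodRule X tmpl tval fval R0 →
      GoodRule X tmpl tval fval R1 → GoodRule X tmpl tval fval (.cond φ R0 R1)
  | par {Rs} : (∀ R ∈ Rs, GoodRule X tmpl tval fval R) → GoodRule X tmpl tval fval (.par Rs)

/-- ξ is a final history for rule R in state X. -/
inductive Final {A Q F E : Type*} (X : F → List A → A) (tmpl : E → List A → Q)
    (tval fval : A) (ξ : Hist A Q) : Rule F E → Prop
  | upd {f ts t0} : (∀ t ∈ t0 :: ts, HasVal X tmpl ξ.ans t) →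
      Final X tmpl tval fval ξ (.upd f ts t0)
  | issue {e ts} : (∀ t ∈ ts, HasVal X tmpl ξ.ans t) →
      Final X tmpl tval fval ξ (.issue e ts)
  | fail : Final X tmpl tval fval ξ .fail
  | condT {φ R0 R1} : GVal X tmpl tval fval ξ φ true → Final X tmpl tval fval ξ R0 →
      Final X tmpl tval fval ξ (.cond φ R0 R1)
  | condF {φ R0 R1} : GVal X tmpl tval fval ξ φ false → Final X tmpl tval fval ξ R1 →
      Final X tmpl tval fval ξ (.cond φ R0 R1)
  | par {Rs} : (∀ R ∈ Rs, Final X tmpl tval fval ξ R) → Final X tmpl tval fval ξ (.par Rs)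

/-- Membership of an update ⟨f, ā, a₀⟩ in the update set produced by a rule. -/
inductive UpdSet {A Q F E : Type*} (X : F → List A → A) (tmpl : E → List A → Q)
    (tval fval : A) (ξ : Hist A Q) : Rule F E → F × List A × A → Prop
  | upd {f ts t0 as a0} : ts.length = as.length →
      (∀ p ∈ ts.zip as, Val X tmpl ξ.ans p.1 p.2) → Val X tmpl ξ.ans t0 a0 →
      UpdSet X tmpl tval fval ξ (.upd f ts t0) (f, as, a0)
  | condT {φ R0 R1 u} : GVal X tmpl tval fval ξ φ true → UpdSet X tmpl tval fval ξ R0 u →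
      UpdSet X tmpl tval fval ξ (.cond φ R0 R1) u
  | condF {φ R0 R1 u} : GVal X tmpl tval fval ξ φ false → UpdSet X tmpl tval fval ξ R1 u →
      UpdSet X tmpl tval fval ξ (.cond φ R0 R1) u
  | par {Rs R u} : R ∈ Rs → UpdSet X tmpl tval fval ξ R u →
      UpdSet X tmpl tval fval ξ (.par Rs) u

/-- A clash: two distinct updates of the same location in the update set. -/
def Clash {A Q F E : Type*} (X : F → List A → A) (tmpl : E → List A → Q)
    (tval fval : A) (ξ : Hist A Q) (R : Rule F E) : Prop :=
  ∃ f as a a', UpdSet X tmpl tval fval ξ R (f, as, a) ∧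
    UpdSet X tmpl tval fval ξ R (f, as, a') ∧ a ≠ a'

/-- ξ fails for R in X. -/
inductive Fails {A Q F E : Type*} (X : F → List A → A) (tmpl : E → List A → Q)
    (tval fval : A) (ξ : Hist A Q) : Rule F E → Prop
  | fail : Fails X tmpl tval fval ξ .fail
  | condT {φ R0 R1} : GVal X tmpl tval fval ξ φ true → Fails X tmpl tval fval ξ R0 →
      Fails X tmpl tval fval ξ (.cond φ R0 R1)
  | condF {φ R0 R1} : GVal X tmpl tval fval ξ φ false → Fails X tmpl tval fval ξ R1 →
      Fails X tmpl tval fval ξ (.cond φ R0 R1)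
  | parFail {Rs R} : Final X tmpl tval fval ξ (.par Rs) → R ∈ Rs →
      Fails X tmpl tval fval ξ R → Fails X tmpl tval fval ξ (.par Rs)
  | parClash {Rs} : Final X tmpl tval fval ξ (.par Rs) →
      Clash X tmpl tval fval ξ (.par Rs) → Fails X tmpl tval fval ξ (.par Rs)

/-- ξ succeeds for R in X. -/
inductive Succeeds {A Q F E : Type*} (X : F → List A → A) (tmpl : E → List A → Q)
    (tval fval : A) (ξ : Hist A Q) : Rule F E → Prop
  | upd {f ts t0} : (∀ t ∈ t0 :: ts, HasVal X tmpl ξ.ans t) →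
      Succeeds X tmpl tval fval ξ (.upd f ts t0)
  | issue {e ts} : (∀ t ∈ ts, HasVal X tmpl ξ.ans t) →
      Succeeds X tmpl tval fval ξ (.issue e ts)
  | condT {φ R0 R1} : GVal X tmpl tval fval ξ φ true → Succeeds X tmpl tval fval ξ R0 →
      Succeeds X tmpl tval fval ξ (.cond φ R0 R1)
  | condF {φ R0 R1} : GVal X tmpl tval fval ξ φ false → Succeeds X tmpl tval fval ξ R1 →
      Succeeds X tmpl tval fval ξ (.cond φ R0 R1)
  | par {Rs} : (∀ R ∈ Rs, Succeeds X tmpl tval fval ξ R) →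
      ¬ Clash X tmpl tval fval ξ (.par Rs) → Succeeds X tmpl tval fval ξ (.par Rs)

/-- Queries caused by a rule, ξ ⊢_X^R q. -/
inductive RCauses {A Q F E : Type*} (X : F → List A → A) (tmpl : E → List A → Q)
    (tval fval : A) (ξ : Hist A Q) : Rule F E → Q → Prop
  | updArg {f ts t0 t' q} : t' ∈ t0 :: ts → Causes X tmpl ξ.ans t' q →
      RCauses X tmpl tval fval ξ (.upd f ts t0) q
  | issueArg {e ts t' q} : t' ∈ ts → Causes X tmpl ξ.ans t' q →
      RCauses X tmpl tval fval ξ (.issue e ts) q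
  | issueQ {e : E} {ts as} : ts.length = as.length →
      (∀ p ∈ ts.zip as, Val X tmpl ξ.ans p.1 p.2) → ξ.ans (tmpl e as) = none →
      RCauses X tmpl tval fval ξ (.issue e ts) (tmpl e as)
  | condG {φ R0 R1 q} : (¬ ∃ b, GVal X tmpl tval fval ξ φ b) →
      GCauses X tmpl tval fval ξ φ q → RCauses X tmpl tval fval ξ (.cond φ R0 R1) q
  | condT {φ R0 R1 q} : GVal X tmpl tval fval ξ φ true → RCauses X tmpl tval fval ξ R0 q →
      RCauses X tmpl tval fval ξ (.cond φ R0 R1) q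
  | condF {φ R0 R1 q} : GVal X tmpl tval fval ξ φ false → RCauses X tmpl tval fval ξ R1 q →
      RCauses X tmpl tval fval ξ (.cond φ R0 R1) q
  | par {Rs R q} : R ∈ Rs → RCauses X tmpl tval fval ξ R q →
      RCauses X tmpl tval fval ξ (.par Rs) q

section Monotonicity

variable {A Q F E : Type*} {X : F → List A → A} {tmpl : E → List A → Q} {tval fval : A}
  {ζ η ξ : Hist A Q}

lemma List.eq_of_forall_mem_zip_unique {α β : Type*} {r : α → β → Prop} {l : List α}
    {l₁ l₂ : List β} (h₁ : l.length = l₁.length) (h₂ : l.length = l₂.length)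
    (hr₁ : ∀ p ∈ l.zip l₁, ∀ b, r p.1 b → p.2 = b)
    (hr₂ : ∀ p ∈ l.zip l₂, r p.1 p.2) :
    l₁ = l₂ := by
  induction l generalizing l₁ l₂ with
  | nil => rw [List.eq_nil_of_length_eq_zero h₁.symm, List.eq_nil_of_length_eq_zero h₂.symm]
  | cons a l ih =>
    obtain _ | ⟨b₁, l₁⟩ := l₁
    · simp at h₁
    obtain _ | ⟨b₂, l₂⟩ := l₂
    · simp at h₂
    simp only [List.length_cons, List.zip_cons_cons, List.mem_cons, forall_eq_or_imp] at *
    rw [hr₁.1 b₂ hr₂.1, ih (by omega) (by omega) hr₁.2 hr₂.2]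

namespace InitSeg

lemma ans_eq_some (hseg : InitSeg η ξ) {x : Q} {a : A} (h : η.ans x = some a) :
    ξ.ans x = some a := by
  rw [← hseg.1 x (by simp [h]), h]

lemma ans_ne_none (hseg : InitSeg η ξ) {x : Q} (h : η.ans x ≠ none) : ξ.ans x ≠ none := by
  rwa [← hseg.1 x h]

lemma trans (h₁ : InitSeg ζ η) (h₂ : InitSeg η ξ) : InitSeg ζ ξ := by
  refine ⟨fun x hx => (h₁.1 x hx).trans (h₂.1 x (h₁.ans_ne_none hx)), ?_, fun x y => ?_⟩
  · intro x y hxy hy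
    have hyη := h₁.ans_ne_none hy
    exact h₁.2.1 x y ((h₂.2.2 x y).2 ⟨hxy, h₂.2.1 x y hxy hyη, hyη⟩) hy
  · rw [h₁.2.2, h₂.2.2]
    constructor
    · rintro ⟨⟨hle, -⟩, hx, hy⟩
      exact ⟨hle, hx, hy⟩
    · rintro ⟨hle, hx, hy⟩
      exact ⟨⟨hle, h₁.ans_ne_none hx, h₁.ans_ne_none hy⟩, hx, hy⟩

lemma of_dom_subset (h₁ : InitSeg ζ ξ) (h₂ : InitSeg η ξ)
    (hsub : ∀ x, ζ.ans x ≠ none → η.ans x ≠ none) : InitSeg ζ η := by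
  refine ⟨fun x hx => (h₁.1 x hx).trans (h₂.1 x (hsub x hx)).symm,
    fun x y hxy hy => h₁.2.1 x y ((h₂.2.2 x y).1 hxy).1 hy, fun x y => ?_⟩
  rw [h₁.2.2, h₂.2.2]
  constructor
  · rintro ⟨hle, hx, hy⟩
    exact ⟨⟨hle, hsub x hx, hsub y hy⟩, hx, hy⟩
  · rintro ⟨⟨hle, -⟩, hx, hy⟩
    exact ⟨hle, hx, hy⟩

lemma total (hξ : IsHistory ξ) (h₁ : InitSeg ζ ξ) (h₂ : InitSeg η ξ) :
    InitSeg ζ η ∨ InitSeg η ζ := by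
  by_cases hsub : ∀ x, ζ.ans x ≠ none → η.ans x ≠ none
  · exact .inl (of_dom_subset h₁ h₂ hsub)
  push Not at hsub
  obtain ⟨x, hxζ, hxη⟩ := hsub
  refine .inr (of_dom_subset h₂ h₁ fun y hy => ?_)
  rcases hξ.2.2.2 x y (h₁.ans_ne_none hxζ) (h₂.ans_ne_none hy) with hxy | hyx
  · exact absurd (h₂.2.1 x y hxy hy) (by simp [hxη])
  · exact h₁.2.1 y x hyx hxζ

end InitSeg

lemma Val.mono (hseg : InitSeg η ξ) {t : Term F E} {a : A} (h : Val X tmpl η.ans t a) :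
    Val X tmpl ξ.ans t a := by
  induction h with
  | func hlen _ ih => exact .func hlen ih
  | ext hlen _ hans ih => exact .ext hlen ih (hseg.ans_eq_some hans)

lemma HasVal.mono (hseg : InitSeg η ξ) {t : Term F E} (h : HasVal X tmpl η.ans t) :
    HasVal X tmpl ξ.ans t :=
  h.imp fun _ => Val.mono hseg

lemma Val.unique {ans : Q → Option A} {t : Term F E} {a a' : A}
    (h : Val X tmpl ans t a) (h' : Val X tmpl ans t a') : a = a' := by
  induction h generalizing a' with
  | func hlen _ ih =>
    cases h' with
    | func hlen' hvals' => rw [List.eq_of_forall_mem_zip_unique hlen hlen' ih hvals']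
  | ext hlen _ hans ih =>
    cases h' with
    | ext hlen' hvals' hans' =>
      rw [List.eq_of_forall_mem_zip_unique hlen hlen' ih hvals', hans'] at hans
      exact Option.some_injective _ hans.symm

lemma Val.of_initSeg_of_hasVal (hseg : InitSeg η ξ) {t : Term F E} {a : A}
    (hη : HasVal X tmpl η.ans t) (h : Val X tmpl ξ.ans t a) : Val X tmpl η.ans t a := by
  obtain ⟨a', ha'⟩ := hη
  rwa [(ha'.mono hseg).unique h] at ha'

/-- A false timing guard `s ⪯ t` at `η` stays false at `ξ` with `η` itself as the witness;
a true one stays true because any initial segment of `ξ` either lies inside `η` or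
contains it. -/
lemma GVal.mono (hη : IsHistory η) (hξ : IsHistory ξ) (hseg : InitSeg η ξ) {φ : Guard F E}
    {b : Bool} (h : GVal X tmpl tval fval η φ b) : GVal X tmpl tval fval ξ φ b := by
  induction h with
  | tmT h => exact .tmT (h.mono hseg)
  | tmF h => exact .tmF (h.mono hseg)
  | @timingT₁ s t hs ht =>
    by_cases hξt : HasVal X tmpl ξ.ans t
    · refine .timingT₂ (hs.mono hseg) hξt fun ζ _ hζ hζt => ?_
      rcases InitSeg.total hξ hζ hseg with hζη | hηζ
      · exact absurd (hζt.mono hζη) ht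
      · exact hs.mono hηζ
    · exact .timingT₁ (hs.mono hseg) hξt
  | timingT₂ hs ht hall =>
    refine .timingT₂ (hs.mono hseg) (ht.mono hseg) fun ζ hζ hζξ hζt => ?_
    rcases InitSeg.total hξ hζξ hseg with hζη | hηζ
    · exact hall ζ hζ hζη hζt
    · exact hs.mono hηζ
  | @timingF₁ s t ht hs =>
    by_cases hξs : HasVal X tmpl ξ.ans s
    · exact .timingF₂ hξs (ht.mono hseg) ⟨η, hη, hseg, ht, hs⟩
    · exact .timingF₁ (ht.mono hseg) hξs
  | timingF₂ hs ht hex =>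
    obtain ⟨ζ, hζ, hζη, hζt, hζs⟩ := hex
    exact .timingF₂ (hs.mono hseg) (ht.mono hseg) ⟨ζ, hζ, hζη.trans hseg, hζt, hζs⟩
  | kandT _ _ ih₁ ih₂ => exact .kandT ih₁ ih₂
  | kandF₀ _ ih => exact .kandF₀ ih
  | kandF₁ _ ih => exact .kandF₁ ih
  | korF _ _ ih₁ ih₂ => exact .korF ih₁ ih₂
  | korT₀ _ ih => exact .korT₀ ih
  | korT₁ _ ih => exact .korT₁ ih
  | knot _ ih => exact .knot ih

lemma GVal.unique (htf : tval ≠ fval) {φ : Guard F E} {b b' : Bool}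
    (h : GVal X tmpl tval fval ξ φ b) (h' : GVal X tmpl tval fval ξ φ b') : b = b' := by
  induction φ generalizing b b' with
  | tm t =>
    cases h <;> cases h' <;> first
      | rfl
      | exact absurd (Val.unique ‹_› ‹_›) htf
  | timing s t =>
    cases h <;> cases h' <;> first
      | rfl
      | contradiction
      | obtain ⟨ζ, hζ, hζξ, hζt, hζs⟩ := ‹∃ ζ, IsHistory ζ ∧ InitSeg ζ ξ ∧
            HasVal X tmpl ζ.ans t ∧ ¬ HasVal X tmpl ζ.ans s›
        exact absurd (‹∀ ζ, IsHistory ζ → InitSeg ζ ξ →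
            HasVal X tmpl ζ.ans t → HasVal X tmpl ζ.ans s› ζ hζ hζξ hζt) hζs
  | kand φ ψ ihφ ihψ =>
    cases h <;> cases h' <;> first | rfl | exact ihφ ‹_› ‹_› | exact ihψ ‹_› ‹_›
  | kor φ ψ ihφ ihψ =>
    cases h <;> cases h' <;> first | rfl | exact ihφ ‹_› ‹_› | exact ihψ ‹_› ‹_›
  | knot φ ih =>
    cases h with
    | knot h => cases h' with
      | knot h' => rw [ih h h']

lemma Final.mono (hη : IsHistory η) (hξ : IsHistory ξ) (hseg : InitSeg η ξ) {R : Rule F E}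
    (h : Final X tmpl tval fval η R) : Final X tmpl tval fval ξ R := by
  induction h with
  | upd h => exact .upd fun t ht => (h t ht).mono hseg
  | issue h => exact .issue fun t ht => (h t ht).mono hseg
  | fail => exact .fail
  | condT hφ _ ih => exact .condT (hφ.mono hη hξ hseg) ih
  | condF hφ _ ih => exact .condF (hφ.mono hη hξ hseg) ih
  | par _ ih => exact .par ih

lemma UpdSet.mono (hη : IsHistory η) (hξ : IsHistory ξ) (hseg : InitSeg η ξ) {R : Rule F E}
    {u : F × List A × A} (h : UpdSet X tmpl tval fval η R u) :
    UpdSet X tmpl tval fval ξ R u := by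
  induction h with
  | upd hlen hvals hv => exact .upd hlen (fun p hp => (hvals p hp).mono hseg) (hv.mono hseg)
  | condT hφ _ ih => exact .condT (hφ.mono hη hξ hseg) ih
  | condF hφ _ ih => exact .condF (hφ.mono hη hξ hseg) ih
  | par hR _ ih => exact .par hR ih

lemma Clash.mono (hη : IsHistory η) (hξ : IsHistory ξ) (hseg : InitSeg η ξ) {R : Rule F E}
    (h : Clash X tmpl tval fval η R) : Clash X tmpl tval fval ξ R :=
  let ⟨f, as, a, a', h₁, h₂, hne⟩ := h
  ⟨f, as, a, a', h₁.mono hη hξ hseg, h₂.mono hη hξ hseg, hne⟩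

lemma UpdSet.of_initSeg_of_final (htf : tval ≠ fval) (hη : IsHistory η) (hξ : IsHistory ξ)
    (hseg : InitSeg η ξ) {R : Rule F E} {u : F × List A × A}
    (hfin : Final X tmpl tval fval η R) (h : UpdSet X tmpl tval fval ξ R u) :
    UpdSet X tmpl tval fval η R u := by
  induction h with
  | upd hlen hvals hv =>
    obtain ⟨hfin⟩ := hfin
    refine .upd hlen (fun p hp => ?_) (Val.of_initSeg_of_hasVal hseg (hfin _ (by simp)) hv)
    exact Val.of_initSeg_of_hasVal hseg (hfin _ (.tail _ (List.of_mem_zip hp).1)) (hvals p hp)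
  | condT hφ _ ih =>
    cases hfin with
    | condT _ hfin => exact .condT ‹_› (ih hfin)
    | condF hφη _ => exact absurd (hφ.unique htf (hφη.mono hη hξ hseg)) (by simp)
  | condF hφ _ ih =>
    cases hfin with
    | condF _ hfin => exact .condF ‹_› (ih hfin)
    | condT hφη _ => exact absurd (hφ.unique htf (hφη.mono hη hξ hseg)) (by simp)
  | par hR _ ih =>
    cases hfin with
    | par hfin => exact .par hR (ih (hfin _ hR))

lemma Clash.of_initSeg_of_final (htf : tval ≠ fval) (hη : IsHistory η) (hξ : IsHistory ξ)
    (hseg : InitSeg η ξ) {R : Rule F E} (hfin : Final X tmpl tval fval η R)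
    (h : Clash X tmpl tval fval ξ R) : Clash X tmpl tval fval η R :=
  let ⟨f, as, a, a', h₁, h₂, hne⟩ := h
  ⟨f, as, a, a', h₁.of_initSeg_of_final htf hη hξ hseg hfin,
    h₂.of_initSeg_of_final htf hη hξ hseg hfin, hne⟩

lemma Succeeds.final {R : Rule F E} (h : Succeeds X tmpl tval fval ξ R) :
    Final X tmpl tval fval ξ R := by
  induction h with
  | upd h => exact .upd h
  | issue h => exact .issue h
  | condT hφ _ ih => exact .condT hφ ih
  | condF hφ _ ih => exact .condF hφ ih
  | par _ _ ih => exact .par ih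

lemma Succeeds.mono (htf : tval ≠ fval) (hη : IsHistory η) (hξ : IsHistory ξ)
    (hseg : InitSeg η ξ) {R : Rule F E} (h : Succeeds X tmpl tval fval η R) :
    Succeeds X tmpl tval fval ξ R := by
  induction h with
  | upd h => exact .upd fun t ht => (h t ht).mono hseg
  | issue h => exact .issue fun t ht => (h t ht).mono hseg
  | condT hφ _ ih => exact .condT (hφ.mono hη hξ hseg) ih
  | condF hφ _ ih => exact .condF (hφ.mono hη hξ hseg) ih
  | par hsucc hnc ih =>
    refine .par ih fun hc => hnc (hc.of_initSeg_of_final htf hη hξ hseg ?_)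
    exact .par fun R hR => (hsucc R hR).final

lemma Fails.mono (hη : IsHistory η) (hξ : IsHistory ξ) (hseg : InitSeg η ξ) {R : Rule F E}
    (h : Fails X tmpl tval fval η R) : Fails X tmpl tval fval ξ R := by
  induction h with
  | fail => exact .fail
  | condT hφ _ ih => exact .condT (hφ.mono hη hξ hseg) ih
  | condF hφ _ ih => exact .condF (hφ.mono hη hξ hseg) ih
  | parFail hfin hR _ ih => exact .parFail (hfin.mono hη hξ hseg) hR ih
  | parClash hfin hc => exact .parClash (hfin.mono hη hξ hseg) (hc.mono hη hξ hseg)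

end Monotonicity

theorem stmt11_general {A Q F E : Type*} (X : F → List A → A) (tmpl : E → List A → Q)
    (tval fval : A) (htf : tval ≠ fval)
    (η ξ : Hist A Q) (hη : IsHistory η) (hξ : IsHistory ξ) (hseg : InitSeg η ξ)
    (R : Rule F E) :
    (Final X tmpl tval fval η R → Final X tmpl tval fval ξ R) ∧
    (Succeeds X tmpl tval fval η R → Succeeds X tmpl tval fval ξ R) ∧
    (Fails X tmpl tval fval η R → Fails X tmpl tval fval ξ R) ∧
    (∀ u, UpdSet X tmpl tval fval η R u → UpdSet X tmpl tval fval ξ R u) :=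
  ⟨Final.mono hη hξ hseg, Succeeds.mono htf hη hξ hseg, Fails.mono hη hξ hseg,
    fun _ => UpdSet.mono hη hξ hseg⟩

/-- monotonicity of rule semantics under initial segments:
finality, success and failure persist, and update sets only grow. -/
theorem stmt11 {A Q F E : Type*} (X : F → List A → A) (tmpl : E → List A → Q)
    (tval fval : A) (htf : tval ≠ fval)
    (η ξ : Hist A Q) (hη : IsHistory η) (hξ : IsHistory ξ) (hseg : InitSeg η ξ)
    (R : Rule F E) (hR : GoodRule X tmpl tval fval R) :
    (Final X tmpl tval fval η R → Final X tmpl tval fval ξ R) ∧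
    (Succeeds X tmpl tval fval η R → Succeeds X tmpl tval fval ξ R) ∧
    (Fails X tmpl tval fval η R → Fails X tmpl tval fval ξ R) ∧
    (∀ u, UpdSet X tmpl tval fval η R u → UpdSet X tmpl tval fval ξ R u) :=
  stmt11_general X tmpl tval fval htf η ξ hη hξ hseg R
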